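/- For every homogeneous polynomial P of degree d in n variables and every x ∈ ℝⁿ, the Frobenius norm of the Hessian matrix of P at x satisfies ‖𝓗P(x)‖_F ≤ d(d−1) · ‖P‖ · ‖x‖^{d−2}, where ‖P‖ is the Bombieri norm of P; in particular the spectral norm satisfies ‖𝓗P(x)‖₂ ≤ d(d−1) · ‖P‖ · ‖x‖^{d−2}. -/

import Mathlib

open MvPolynomial Finset

noncomputable def bombieriInner (n d : ℕ) (P Q : MvPolynomial (Fin n) ℝ) : ℝ :=
  ∑ α ∈ P.support, P.coeff α * Q.coeff α *
    (((∏ i, Nat.factorial (α i) : ℕ) : ℝ) / (Nat.factorial d : ℝ))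

noncomputable def bombieriNorm (n d : ℕ) (P : MvPolynomial (Fin n) ℝ) : ℝ :=
  Real.sqrt (bombieriInner n d P P)

def realDisc (n d : ℕ) : Set (MvPolynomial (Fin n) ℝ) :=
  {P | P.IsHomogeneous d ∧ ∃ x : Fin n → ℝ, (∑ i, x i ^ 2) = 1 ∧
    eval x P = 0 ∧ ∀ i, eval x (pderiv i P) = 0}

noncomputable def distDisc (n d : ℕ) (P : MvPolynomial (Fin n) ℝ) : ℝ :=
  sInf {r | ∃ Q ∈ realDisc n d, r = bombieriNorm n d (P - Q)}

/-! ### Auxiliary lemmas -/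

/-- The weight `α! / d!` appearing in the Bombieri inner product. -/
noncomputable def bombieriW (n d : ℕ) (α : Fin n →₀ ℕ) : ℝ :=
  ((∏ i, Nat.factorial (α i) : ℕ) : ℝ) / (Nat.factorial d : ℝ)

lemma bombieriW_pos {n d : ℕ} (α : Fin n →₀ ℕ) : 0 < bombieriW n d α := by
  unfold bombieriW
  apply div_pos
  · exact_mod_cast Finset.prod_pos fun i _ => Nat.factorial_pos _
  · exact_mod_cast Nat.factorial_pos d

lemma degree_eq_sum_univ {n : ℕ} (α : Fin n →₀ ℕ) : Finsupp.degree α = ∑ i, α i :=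
  Finset.sum_subset (Finset.subset_univ _) (fun _ _ hi => Finsupp.notMem_support_iff.mp hi)

lemma supp_sum_eq {n d : ℕ} {P : MvPolynomial (Fin n) ℝ} (hP : P.IsHomogeneous d)
    {α : Fin n →₀ ℕ} (hα : MvPolynomial.coeff α P ≠ 0) : ∑ i, α i = d := by
  rw [← degree_eq_sum_univ, Finsupp.degree_eq_weight_one]
  exact hP hα

lemma coeff_pderiv' {n : ℕ} (i : Fin n) (Q : MvPolynomial (Fin n) ℝ) (β : Fin n →₀ ℕ) :
    MvPolynomial.coeff β (pderiv i Q) =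
      ((β i : ℝ) + 1) * MvPolynomial.coeff (β + Finsupp.single i 1) Q := by
  induction Q using MvPolynomial.induction_on' with
  | add p q hp hq => simp [coeff_add, hp, hq]; ring
  | monomial s a =>
    rw [pderiv_monomial, coeff_monomial, coeff_monomial]
    by_cases h : s = β + Finsupp.single i 1
    · subst h
      have h2 : β + Finsupp.single i 1 - Finsupp.single i 1 = β := by simp
      rw [if_pos h2, if_pos rfl]
      have h3 : (β + Finsupp.single i 1 : Fin n →₀ ℕ) i = β i + 1 := by
        rw [Finsupp.add_apply, Finsupp.single_eq_same]
      rw [h3]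
      push_cast
      ring
    · rw [if_neg h, mul_zero]
      by_cases h2 : s - Finsupp.single i 1 = β
      · have hsi : s i = 0 := by
          by_contra hsi
          apply h
          rw [← h2, tsub_add_cancel_of_le]
          exact Finsupp.single_le_iff.mpr (Nat.one_le_iff_ne_zero.mpr hsi)
        rw [if_pos h2, hsi]
        simp
      · rw [if_neg h2]

lemma isHomogeneous_pderiv' {n m : ℕ} {Q : MvPolynomial (Fin n) ℝ}
    (hQ : Q.IsHomogeneous (m + 1)) (i : Fin n) : (pderiv i Q).IsHomogeneous m := by
  intro β hβ
  rw [coeff_pderiv'] at hβ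
  have h2 : MvPolynomial.coeff (β + Finsupp.single i 1) Q ≠ 0 := by
    intro h; rw [h, mul_zero] at hβ; exact hβ rfl
  have h3 := supp_sum_eq hQ h2
  have h4 : ∑ j, (β + Finsupp.single i 1 : Fin n →₀ ℕ) j = (∑ j, β j) + 1 := by
    simp only [Finsupp.add_apply, Finset.sum_add_distrib]
    congr 1
    simp [Finsupp.single_apply]
  change Finsupp.weight (fun _ => 1) β = m
  rw [← Finsupp.degree_eq_weight_one, degree_eq_sum_univ]
  omega

lemma bombieriInner_self_eq (n d : ℕ) (P : MvPolynomial (Fin n) ℝ) (s : Finset (Fin n →₀ ℕ))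
    (hs : P.support ⊆ s) :
    bombieriInner n d P P = ∑ α ∈ s, (P.coeff α) ^ 2 * bombieriW n d α := by
  rw [bombieriInner]
  rw [Finset.sum_subset hs (fun α _ hα => by
    rw [MvPolynomial.notMem_support_iff.mp hα]; ring)]
  exact Finset.sum_congr rfl fun α _ => by rw [bombieriW]; ring

lemma bombieriInner_self_nonneg (n d : ℕ) (P : MvPolynomial (Fin n) ℝ) :
    0 ≤ bombieriInner n d P P := by
  rw [bombieriInner_self_eq n d P P.support (subset_refl _)]
  exact Finset.sum_nonneg fun α _ => mul_nonneg (sq_nonneg _) (bombieriW_pos α).le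

lemma one_div_bombieriW {n m : ℕ} (α : Fin n →₀ ℕ) (hα : ∑ i, α i = m) :
    1 / bombieriW n m α = (Nat.multinomial Finset.univ (⇑α) : ℝ) := by
  have hspec := Nat.multinomial_spec (Finset.univ : Finset (Fin n)) (⇑α)
  rw [hα] at hspec
  rw [bombieriW, one_div_div]
  rw [div_eq_iff (by exact_mod_cast (Finset.prod_pos fun i _ => Nat.factorial_pos _).ne')]
  rw [mul_comm]
  exact_mod_cast (congrArg (Nat.cast : ℕ → ℝ) hspec).symm

/-- Evaluation bound: `|Q(x)|² ≤ ‖Q‖² · |x|^{2m}` for `Q` homogeneous of degree `m`. -/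
lemma eval_sq_le {n m : ℕ} (Q : MvPolynomial (Fin n) ℝ) (hQ : Q.IsHomogeneous m)
    (x : Fin n → ℝ) :
    (eval x Q) ^ 2 ≤ bombieriInner n m Q Q * (∑ i, x i ^ 2) ^ m := by
  classical
  rw [MvPolynomial.eval_eq']
  set f : (Fin n →₀ ℕ) → ℝ := fun α => MvPolynomial.coeff α Q * Real.sqrt (bombieriW n m α)
  set g : (Fin n →₀ ℕ) → ℝ := fun α => (∏ i, x i ^ α i) * Real.sqrt (1 / bombieriW n m α)
  have hfg : ∀ α ∈ Q.support, MvPolynomial.coeff α Q * ∏ i, x i ^ α i = f α * g α := by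
    intro α _
    have : Real.sqrt (bombieriW n m α) * Real.sqrt (1 / bombieriW n m α) = 1 := by
      rw [← Real.sqrt_mul (bombieriW_pos α).le, mul_one_div,
        div_self (bombieriW_pos α).ne', Real.sqrt_one]
    calc MvPolynomial.coeff α Q * ∏ i, x i ^ α i
        = MvPolynomial.coeff α Q * (∏ i, x i ^ α i) *
            (Real.sqrt (bombieriW n m α) * Real.sqrt (1 / bombieriW n m α)) := by
          rw [this, mul_one]
      _ = f α * g α := by simp only [f, g]; ring
  rw [Finset.sum_congr rfl hfg]
  have hf2 : ∑ α ∈ Q.support, f α ^ 2 = bombieriInner n m Q Q := by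
    rw [bombieriInner_self_eq n m Q Q.support (subset_refl _)]
    refine Finset.sum_congr rfl fun α _ => ?_
    simp only [f, mul_pow, Real.sq_sqrt (bombieriW_pos α).le]
  have hg2 : ∑ α ∈ Q.support, g α ^ 2 ≤ (∑ i, x i ^ 2) ^ m := by
    have hg : ∀ α ∈ Q.support, g α ^ 2 =
        (Nat.multinomial Finset.univ (⇑α) : ℝ) * ∏ i, (x i ^ 2) ^ α i := by
      intro α hα
      have h1 : (∏ i, x i ^ α i) ^ 2 = ∏ i, (x i ^ 2) ^ α i := by
        rw [← Finset.prod_pow]; exact Finset.prod_congr rfl fun i _ => pow_right_comm _ _ _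
      rw [mul_pow, Real.sq_sqrt (one_div_pos.mpr (bombieriW_pos α)).le,
        one_div_bombieriW α (supp_sum_eq hQ (MvPolynomial.mem_support_iff.mp hα)), h1]
      ring
    rw [Finset.sum_congr rfl hg]
    rw [Finset.sum_pow_eq_sum_piAntidiag Finset.univ (fun i => x i ^ 2) m]
    have himg := Finset.sum_image (s := Q.support) (f := fun k : Fin n → ℕ =>
        (Nat.multinomial Finset.univ k : ℝ) * ∏ i, (x i ^ 2) ^ k i)
        (g := fun α : Fin n →₀ ℕ => ⇑α) (fun a _ b _ h => DFunLike.coe_injective h)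
    rw [← himg]
    apply Finset.sum_le_sum_of_subset_of_nonneg
    · intro k hk
      obtain ⟨α, hα, rfl⟩ := Finset.mem_image.mp hk
      rw [Finset.mem_piAntidiag]
      exact ⟨supp_sum_eq hQ (MvPolynomial.mem_support_iff.mp hα), fun i _ => Finset.mem_univ i⟩
    · intro k _ _
      have h0 : (0:ℝ) ≤ ∏ i, (x i ^ 2) ^ k i :=
        Finset.prod_nonneg fun i _ => pow_nonneg (sq_nonneg _) _
      positivity
  calc (∑ α ∈ Q.support, f α * g α) ^ 2
      ≤ (∑ α ∈ Q.support, f α ^ 2) * ∑ α ∈ Q.support, g α ^ 2 :=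
        Finset.sum_mul_sq_le_sq_mul_sq _ _ _
    _ ≤ bombieriInner n m Q Q * (∑ i, x i ^ 2) ^ m := by
        rw [← hf2]
        exact mul_le_mul_of_nonneg_left hg2 (Finset.sum_nonneg fun α _ => sq_nonneg (f α))

lemma nat_fact_aux {n : ℕ} (α : Fin n →₀ ℕ) (i : Fin n) :
    (α i) ^ 2 * ∏ j, Nat.factorial ((α - Finsupp.single i 1 : Fin n →₀ ℕ) j) =
      α i * ∏ j, Nat.factorial (α j) := by
  rcases Nat.eq_zero_or_pos (α i) with h | h
  · have : α - Finsupp.single i 1 = α := by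
      ext j
      rw [Finsupp.tsub_apply, Finsupp.single_apply]
      rcases eq_or_ne i j with rfl | hij
      · simp [h]
      · simp [hij]
    rw [this, h]
    simp
  · have h1 : ∀ j, (α - Finsupp.single i 1 : Fin n →₀ ℕ) j =
        if j = i then α i - 1 else α j := by
      intro j
      rw [Finsupp.tsub_apply, Finsupp.single_apply]
      rcases eq_or_ne i j with rfl | hij
      · simp
      · simp [hij, Ne.symm hij]
    rw [← Finset.mul_prod_erase Finset.univ _ (Finset.mem_univ i),
        ← Finset.mul_prod_erase Finset.univ (fun j => Nat.factorial (α j)) (Finset.mem_univ i)]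
    have h2 : ∏ j ∈ Finset.univ.erase i,
        Nat.factorial ((α - Finsupp.single i 1 : Fin n →₀ ℕ) j) =
        ∏ j ∈ Finset.univ.erase i, Nat.factorial (α j) := by
      refine Finset.prod_congr rfl fun j hj => ?_
      rw [h1 j, if_neg (Finset.mem_erase.mp hj).1]
    rw [h2, h1 i, if_pos rfl]
    have h3 : α i * Nat.factorial (α i - 1) = Nat.factorial (α i) := by
      obtain ⟨k, hk⟩ := Nat.exists_eq_add_of_le h
      rw [hk]
      simp [Nat.factorial_succ, Nat.add_comm 1 k, Nat.add_sub_cancel]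
    rw [← mul_assoc, ← mul_assoc, pow_two, mul_assoc (α i), h3]

/-- Summing the squared Bombieri norms of the partial derivatives. -/
lemma sum_inner_pderiv_le {n m : ℕ} (Q : MvPolynomial (Fin n) ℝ)
    (hQ : Q.IsHomogeneous (m + 1)) :
    ∑ i, bombieriInner n m (pderiv i Q) (pderiv i Q) ≤
      ((m : ℝ) + 1) ^ 2 * bombieriInner n (m + 1) Q Q := by
  classical
  have key : ∀ i : Fin n, bombieriInner n m (pderiv i Q) (pderiv i Q) ≤
      ∑ α ∈ Q.support, ((α i : ℝ)) ^ 2 * (MvPolynomial.coeff α Q) ^ 2 *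
        bombieriW n m (α - Finsupp.single i 1) := by
    intro i
    rw [bombieriInner_self_eq n m (pderiv i Q) (pderiv i Q).support (subset_refl _)]
    set g : (Fin n →₀ ℕ) → ℝ := fun γ =>
      ((γ i : ℝ)) ^ 2 * (MvPolynomial.coeff γ Q) ^ 2 *
        bombieriW n m (γ - Finsupp.single i 1) with hgdef
    have hterm : ∀ β ∈ (pderiv i Q).support,
        (MvPolynomial.coeff β (pderiv i Q)) ^ 2 * bombieriW n m β =
          g (β + Finsupp.single i 1) := by
      intro β _
      have hb1 : (β + Finsupp.single i 1 : Fin n →₀ ℕ) i = β i + 1 := by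
        rw [Finsupp.add_apply, Finsupp.single_eq_same]
      have hb2 : β + Finsupp.single i 1 - Finsupp.single i 1 = β := by simp
      rw [hgdef]
      simp only [hb1, hb2]
      rw [coeff_pderiv']
      push_cast
      ring
    rw [Finset.sum_congr rfl hterm]
    have himg := Finset.sum_image (s := (pderiv i Q).support) (f := g)
      (g := fun β : Fin n →₀ ℕ => β + Finsupp.single i 1)
      (fun a _ b _ h => add_left_injective _ h)
    rw [← himg]
    apply Finset.sum_le_sum_of_subset_of_nonneg
    · intro γ hγ
      obtain ⟨β, hβ, rfl⟩ := Finset.mem_image.mp hγ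
      rw [MvPolynomial.mem_support_iff] at hβ ⊢
      rw [coeff_pderiv'] at hβ
      intro h
      rw [h, mul_zero] at hβ
      exact hβ rfl
    · intro γ _ _
      exact mul_nonneg (mul_nonneg (sq_nonneg _) (sq_nonneg _)) (bombieriW_pos _).le
  calc ∑ i, bombieriInner n m (pderiv i Q) (pderiv i Q)
      ≤ ∑ i, ∑ α ∈ Q.support, ((α i : ℝ)) ^ 2 * (MvPolynomial.coeff α Q) ^ 2 *
          bombieriW n m (α - Finsupp.single i 1) := Finset.sum_le_sum fun i _ => key i
    _ = ((m : ℝ) + 1) ^ 2 * bombieriInner n (m + 1) Q Q := by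
        rw [Finset.sum_comm]
        rw [bombieriInner_self_eq n (m + 1) Q Q.support (subset_refl _), Finset.mul_sum]
        refine Finset.sum_congr rfl fun α hα => ?_
        have hdeg : ∑ i, α i = m + 1 :=
          supp_sum_eq hQ (MvPolynomial.mem_support_iff.mp hα)
        have hW : ∀ i : Fin n, ((α i : ℝ)) ^ 2 * bombieriW n m (α - Finsupp.single i 1) =
            (α i : ℝ) * (((∏ j, Nat.factorial (α j) : ℕ) : ℝ) / (Nat.factorial m : ℝ)) := by
          intro i
          rw [bombieriW, ← mul_div_assoc, ← mul_div_assoc]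
          congr 1
          exact_mod_cast congrArg (Nat.cast : ℕ → ℝ) (nat_fact_aux α i)
        have hsum : ∑ i, ((α i : ℝ)) ^ 2 * (MvPolynomial.coeff α Q) ^ 2 *
            bombieriW n m (α - Finsupp.single i 1) =
            (MvPolynomial.coeff α Q) ^ 2 * ((m : ℝ) + 1) *
              (((∏ j, Nat.factorial (α j) : ℕ) : ℝ) / (Nat.factorial m : ℝ)) := by
          have hstep : ∀ i : Fin n, ((α i : ℝ)) ^ 2 * (MvPolynomial.coeff α Q) ^ 2 *
              bombieriW n m (α - Finsupp.single i 1) = (MvPolynomial.coeff α Q) ^ 2 *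
                ((α i : ℝ) * (((∏ j, Nat.factorial (α j) : ℕ) : ℝ) /
                  (Nat.factorial m : ℝ))) := by
            intro i
            rw [mul_right_comm, hW i]
            ring
          rw [Finset.sum_congr rfl fun i _ => hstep i, ← Finset.mul_sum]
          have hcast : ∑ i, (α i : ℝ) = (m : ℝ) + 1 := by
            exact_mod_cast congrArg (Nat.cast : ℕ → ℝ) hdeg
          rw [← Finset.sum_mul, hcast]
          ring
        rw [hsum, bombieriW]
        have hfact : (Nat.factorial (m + 1) : ℝ) = ((m : ℝ) + 1) * (Nat.factorial m : ℝ) := by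
          rw [Nat.factorial_succ]; push_cast; ring
        rw [hfact]
        have hm : (Nat.factorial m : ℝ) ≠ 0 := by exact_mod_cast (Nat.factorial_pos m).ne'
        field_simp

/-- the Frobenius norm of the Hessian of a homogeneous polynomial `P` of
degree `d` satisfies `‖𝓗P(x)‖_F ≤ d(d-1)·‖P‖·‖x‖^(d-2)`; in particular every eigenvalue
`μ` of the Hessian satisfies `|μ| ≤ d(d-1)·‖P‖·‖x‖^(d-2)` (spectral norm bound). -/
theorem hessian_frobenius_le_bombieriNorm (n d : ℕ) (hn : 1 < n) (hd : 1 < d)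
    (P : MvPolynomial (Fin n) ℝ) (hP : P.IsHomogeneous d) (x : Fin n → ℝ) :
    Real.sqrt (∑ i, ∑ j, (eval x (pderiv i (pderiv j P))) ^ 2) ≤
      d * (d - 1 : ℕ) * bombieriNorm n d P * (Real.sqrt (∑ i, x i ^ 2)) ^ (d - 2)
    ∧ ∀ (μ : ℝ) (v : Fin n → ℝ), v ≠ 0 →
        (Matrix.of fun i j => eval x (pderiv i (pderiv j P))).mulVec v = μ • v →
        |μ| ≤ d * (d - 1 : ℕ) * bombieriNorm n d P * (Real.sqrt (∑ i, x i ^ 2)) ^ (d - 2) := by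
  obtain ⟨e, rfl⟩ : ∃ e, d = e + 2 := ⟨d - 2, by omega⟩
  have hsub1 : e + 2 - 1 = e + 1 := rfl
  have hsub2 : e + 2 - 2 = e := rfl
  rw [hsub1, hsub2]
  set S : ℝ := ∑ i, x i ^ 2 with hS
  have hS0 : 0 ≤ S := Finset.sum_nonneg fun i _ => sq_nonneg _
  have hPj : ∀ j, (pderiv j P).IsHomogeneous (e + 1) := fun j => isHomogeneous_pderiv' hP j
  have hPij : ∀ i j, (pderiv i (pderiv j P)).IsHomogeneous e := fun i j =>
    isHomogeneous_pderiv' (hPj j) i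
  have hB0 : 0 ≤ bombieriInner n (e + 2) P P := bombieriInner_self_nonneg _ _ _
  -- bound on the double sum of Bombieri inner products
  have hIn : ∑ i, ∑ j, bombieriInner n e (pderiv i (pderiv j P)) (pderiv i (pderiv j P)) ≤
      ((e : ℝ) + 1) ^ 2 * (((e : ℝ) + 2) ^ 2 * bombieriInner n (e + 2) P P) := by
    rw [Finset.sum_comm]
    calc ∑ j, ∑ i, bombieriInner n e (pderiv i (pderiv j P)) (pderiv i (pderiv j P))
        ≤ ∑ j, ((e : ℝ) + 1) ^ 2 * bombieriInner n (e + 1) (pderiv j P) (pderiv j P) := by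
          refine Finset.sum_le_sum fun j _ => ?_
          exact sum_inner_pderiv_le (pderiv j P) (hPj j)
      _ = ((e : ℝ) + 1) ^ 2 * ∑ j, bombieriInner n (e + 1) (pderiv j P) (pderiv j P) := by
          rw [Finset.mul_sum]
      _ ≤ ((e : ℝ) + 1) ^ 2 * (((e : ℝ) + 2) ^ 2 * bombieriInner n (e + 2) P P) := by
          apply mul_le_mul_of_nonneg_left _ (by positivity)
          have h2 : ∑ j, bombieriInner n (e + 1) (pderiv j P) (pderiv j P) ≤
              (((e + 1 : ℕ) : ℝ) + 1) ^ 2 * bombieriInner n (e + 2) P P :=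
            sum_inner_pderiv_le (m := e + 1) P hP
          have h3 : (((e + 1 : ℕ) : ℝ) + 1) ^ 2 = ((e : ℝ) + 2) ^ 2 := by push_cast; ring
          rw [h3] at h2
          exact h2
  -- Frobenius squared bound
  have hF2 : ∑ i, ∑ j, (eval x (pderiv i (pderiv j P))) ^ 2 ≤
      (((e : ℝ) + 2) * ((e : ℝ) + 1)) ^ 2 * bombieriInner n (e + 2) P P * S ^ e := by
    calc ∑ i, ∑ j, (eval x (pderiv i (pderiv j P))) ^ 2
        ≤ ∑ i, ∑ j, bombieriInner n e (pderiv i (pderiv j P)) (pderiv i (pderiv j P)) * S ^ e :=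
          Finset.sum_le_sum fun i _ => Finset.sum_le_sum fun j _ => eval_sq_le _ (hPij i j) x
      _ = (∑ i, ∑ j, bombieriInner n e (pderiv i (pderiv j P)) (pderiv i (pderiv j P)))
            * S ^ e := by
          rw [Finset.sum_mul]
          exact Finset.sum_congr rfl fun i _ => (Finset.sum_mul _ _ _).symm
      _ ≤ (((e : ℝ) + 1) ^ 2 * (((e : ℝ) + 2) ^ 2 * bombieriInner n (e + 2) P P)) * S ^ e :=
          mul_le_mul_of_nonneg_right hIn (by positivity)
      _ = (((e : ℝ) + 2) * ((e : ℝ) + 1)) ^ 2 * bombieriInner n (e + 2) P P * S ^ e := by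
          ring
  set RHS : ℝ := (e + 2 : ℕ) * (e + 1 : ℕ) * bombieriNorm n (e + 2) P *
    (Real.sqrt S) ^ e with hRHS
  have hRHS0 : 0 ≤ RHS := by
    rw [hRHS, bombieriNorm]
    positivity
  have hRHSsq : RHS ^ 2 = (((e : ℝ) + 2) * ((e : ℝ) + 1)) ^ 2 *
      bombieriInner n (e + 2) P P * S ^ e := by
    rw [hRHS, bombieriNorm, mul_pow, mul_pow, mul_pow, Real.sq_sqrt hB0,
      pow_right_comm, Real.sq_sqrt hS0]
    push_cast
    ring
  have part1 : Real.sqrt (∑ i, ∑ j, (eval x (pderiv i (pderiv j P))) ^ 2) ≤ RHS := by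
    calc Real.sqrt (∑ i, ∑ j, (eval x (pderiv i (pderiv j P))) ^ 2)
        ≤ Real.sqrt (RHS ^ 2) := Real.sqrt_le_sqrt (by rw [hRHSsq]; exact hF2)
      _ = RHS := Real.sqrt_sq hRHS0
  refine ⟨part1, fun μ v hv hmul => ?_⟩
  -- spectral bound
  have hvpos : 0 < ∑ j, v j ^ 2 := by
    obtain ⟨i, hi⟩ := Function.ne_iff.mp hv
    exact Finset.sum_pos' (fun j _ => sq_nonneg _)
      ⟨i, Finset.mem_univ i, pow_two_pos_of_ne_zero hi⟩
  have hrow : ∀ i, (∑ j, eval x (pderiv i (pderiv j P)) * v j) = μ * v i := by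
    intro i
    have := congrFun hmul i
    simpa [Matrix.mulVec, dotProduct] using this
  have hsq : μ ^ 2 * ∑ j, v j ^ 2 ≤
      (∑ i, ∑ j, (eval x (pderiv i (pderiv j P))) ^ 2) * ∑ j, v j ^ 2 := by
    calc μ ^ 2 * ∑ j, v j ^ 2 = ∑ i, (μ * v i) ^ 2 := by
          rw [Finset.mul_sum]
          exact Finset.sum_congr rfl fun i _ => by ring
      _ = ∑ i, (∑ j, eval x (pderiv i (pderiv j P)) * v j) ^ 2 := by
          exact Finset.sum_congr rfl fun i _ => by rw [hrow i]
      _ ≤ ∑ i, (∑ j, (eval x (pderiv i (pderiv j P))) ^ 2) * ∑ j, v j ^ 2 :=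
          Finset.sum_le_sum fun i _ => Finset.sum_mul_sq_le_sq_mul_sq _ _ _
      _ = (∑ i, ∑ j, (eval x (pderiv i (pderiv j P))) ^ 2) * ∑ j, v j ^ 2 :=
          (Finset.sum_mul _ _ _).symm
  have hmu2 : μ ^ 2 ≤ ∑ i, ∑ j, (eval x (pderiv i (pderiv j P))) ^ 2 :=
    le_of_mul_le_mul_right hsq hvpos
  calc |μ| = Real.sqrt (μ ^ 2) := (Real.sqrt_sq_eq_abs μ).symm
    _ ≤ Real.sqrt (∑ i, ∑ j, (eval x (pderiv i (pderiv j P))) ^ 2) :=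
        Real.sqrt_le_sqrt hmu2
    _ ≤ RHS := part1
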